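/- Let f_1,…,f_k be smooth functions on ℝ^n of the form f_i = y_{t_i} + g_i, with the y_{t_i} distinct coordinates and each g_i independent of all y_{t_1},…,y_{t_k}. Let F be a polynomial in the variables y_{t_1},…,y_{t_k} whose coefficients are smooth functions depending only on the remaining variables. Then there exist smooth functions q_1,…,q_k and a unique smooth function r not depending on y_{t_1},…,y_{t_k} such that F = Σ q_i f_i + r. Moreover r is obtained from F by substituting y_{t_i} := −g_i. -/
import Mathlib


open Classical

/-- A function on `ℝⁿ` "does not depend" on the variables `y_{t i}` (the coordinates in
the range of `t`) if its value only depends on the remaining coordinates. -/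
def IndepOfVars {n k : ℕ} (t : Fin k → Fin n) (h : (Fin n → ℝ) → ℝ) : Prop :=
  ∀ z w : Fin n → ℝ, (∀ j, j ∉ Set.range t → z j = w j) → h z = h w

/-- The substitution `y (t i) := - g i`, leaving the other coordinates unchanged. -/
noncomputable def substNeg {n k : ℕ} (t : Fin k → Fin n)
    (g : Fin k → (Fin n → ℝ) → ℝ) (z : Fin n → ℝ) : Fin n → ℝ :=
  fun j => if h : ∃ i, t i = j then - g h.choose z else z j

theorem substNeg_apply_t {n k : ℕ} (t : Fin k → Fin n) (ht : Function.Injective t)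
    (g : Fin k → (Fin n → ℝ) → ℝ) (z : Fin n → ℝ) (i : Fin k) :
    substNeg t g z (t i) = - g i z := by
  unfold substNeg
  have h : ∃ i', t i' = t i := ⟨i, rfl⟩
  rw [dif_pos h, ht h.choose_spec]

theorem substNeg_apply_not {n k : ℕ} (t : Fin k → Fin n)
    (g : Fin k → (Fin n → ℝ) → ℝ) (z : Fin n → ℝ) (j : Fin n)
    (hj : j ∉ Set.range t) : substNeg t g z j = z j := by
  unfold substNeg
  rw [dif_neg]
  rintro ⟨i, hi⟩
  exact hj ⟨i, hi⟩

theorem contDiff_finset_prod {m : ℕ} {ι : Type*} (s : Finset ι)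
    (f : ι → (Fin m → ℝ) → ℝ) (hf : ∀ i, ContDiff ℝ (⊤ : ℕ∞) (f i)) :
    ContDiff ℝ (⊤ : ℕ∞) (fun z => ∏ i ∈ s, f i z) := by
  induction s using Finset.cons_induction with
  | empty => simpa using contDiff_const
  | cons j s hj ih =>
    simp only [Finset.prod_cons]
    exact (hf j).mul ih

theorem prodDiff {m : ℕ} {ι : Type*} [DecidableEq ι] (s : Finset ι)
    (a b : ι → (Fin m → ℝ) → ℝ)
    (ha : ∀ i, ContDiff ℝ (⊤ : ℕ∞) (a i)) (hb : ∀ i, ContDiff ℝ (⊤ : ℕ∞) (b i)) :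
    ∃ q : ι → (Fin m → ℝ) → ℝ, (∀ i, ContDiff ℝ (⊤ : ℕ∞) (q i)) ∧
      ∀ z, (∏ i ∈ s, a i z) - (∏ i ∈ s, b i z) = ∑ i ∈ s, q i z * (a i z - b i z) := by
  induction s using Finset.induction with
  | empty => exact ⟨fun _ => 0, fun _ => contDiff_const, by simp⟩
  | @insert j s hj ih =>
    obtain ⟨q, hq, hqz⟩ := ih
    refine ⟨fun i => if i = j then (fun z => ∏ x ∈ s, a x z)
        else fun z => b j z * q i z, ?_, ?_⟩
    · intro i
      by_cases h : i = j
      · simpa [h] using contDiff_finset_prod s a ha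
      · simpa [h] using (hb j).mul (hq i)
    · intro z
      rw [Finset.prod_insert hj, Finset.prod_insert hj, Finset.sum_insert hj]
      have hsum : ∀ i ∈ s,
          (fun i => if i = j then (fun z => ∏ x ∈ s, a x z)
            else fun z => b j z * q i z) i z * (a i z - b i z)
          = b j z * (q i z * (a i z - b i z)) := by
        intro i hi
        have hne : i ≠ j := fun h => hj (h ▸ hi)
        simp [hne, mul_assoc]
      rw [Finset.sum_congr rfl hsum, ← Finset.mul_sum, ← hqz z]
      simp only [eq_self_iff_true, if_true]
      ring

theorem perMonomial {n k : ℕ} (t : Fin k → Fin n) (ht : Function.Injective t)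
    (g : Fin k → (Fin n → ℝ) → ℝ) (hgsm : ∀ i, ContDiff ℝ (⊤ : ℕ∞) (g i))
    (d : Fin k → ℕ) :
    ∃ q : Fin k → (Fin n → ℝ) → ℝ, (∀ i, ContDiff ℝ (⊤ : ℕ∞) (q i)) ∧
      ∀ z, (∏ i, (z (t i)) ^ (d i)) - (∏ i, (- g i z) ^ (d i))
        = ∑ i, q i z * (z (t i) + g i z) := by
  have hproj : ∀ i : Fin k, ContDiff ℝ (⊤ : ℕ∞) (fun z : Fin n → ℝ => z (t i)) :=
    fun i => (ContinuousLinearMap.proj (t i) : (Fin n → ℝ) →L[ℝ] ℝ).contDiff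
  obtain ⟨q₀, hq₀, hq₀z⟩ := prodDiff Finset.univ
    (fun i z => (z (t i)) ^ (d i)) (fun i z => (- g i z) ^ (d i))
    (fun i => (hproj i).pow _) (fun i => ((hgsm i).neg).pow _)
  refine ⟨fun i z => q₀ i z *
      ∑ j ∈ Finset.range (d i), (z (t i)) ^ j * (- g i z) ^ (d i - 1 - j), ?_, ?_⟩
  · intro i
    exact (hq₀ i).mul (ContDiff.sum fun j _ => ((hproj i).pow _).mul (((hgsm i).neg).pow _))
  · intro z
    rw [hq₀z z]
    refine Finset.sum_congr rfl fun i _ => ?_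
    simp only
    rw [← geom_sum₂_mul (z (t i)) (- g i z) (d i)]
    ring

/-- Let `f i = y (t i) + g i` on `ℝⁿ`, with the `t i` distinct coordinates and
each `g i` smooth and independent of all the variables `y (t 1), …, y (t k)`.  Let `F` be a
polynomial in the variables `y (t 1), …, y (t k)` whose coefficients are smooth functions
depending only on the remaining variables.  Then there exist smooth `q 1, …, q k` and a
unique smooth `r` not depending on `y (t 1), …, y (t k)` with `F = Σ qᵢ fᵢ + r`; moreover
`r` is obtained from `F` by substituting `y (t i) := - g i`. -/
theorem multivariate_division_remainder {n k : ℕ}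
    (t : Fin k → Fin n) (ht : Function.Injective t)
    (g : Fin k → (Fin n → ℝ) → ℝ)
    (hgsm : ∀ i, ContDiff ℝ (⊤ : ℕ∞) (g i)) (hgi : ∀ i, IndepOfVars t (g i))
    (F : (Fin n → ℝ) → ℝ)
    (hFpoly : ∃ (D : Finset (Fin k → ℕ)) (c : (Fin k → ℕ) → (Fin n → ℝ) → ℝ),
      (∀ d, ContDiff ℝ (⊤ : ℕ∞) (c d)) ∧ (∀ d, IndepOfVars t (c d)) ∧
      ∀ z, F z = ∑ d ∈ D, c d z * ∏ i, (z (t i)) ^ (d i)) :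
    (∃ q : Fin k → (Fin n → ℝ) → ℝ, (∀ i, ContDiff ℝ (⊤ : ℕ∞) (q i)) ∧
        ∀ z, F z = (∑ i, q i z * (z (t i) + g i z)) + F (substNeg t g z)) ∧
      ContDiff ℝ (⊤ : ℕ∞) (fun z => F (substNeg t g z)) ∧
      IndepOfVars t (fun z => F (substNeg t g z)) ∧
      (∀ r' : (Fin n → ℝ) → ℝ, IndepOfVars t r' →
        (∃ q' : Fin k → (Fin n → ℝ) → ℝ,
          ∀ z, F z = (∑ i, q' i z * (z (t i) + g i z)) + r' z) →
        r' = fun z => F (substNeg t g z)) := by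
  obtain ⟨D, c, hcsm, hci, hF⟩ := hFpoly
  have hgsub : ∀ i z, g i (substNeg t g z) = g i z :=
    fun i z => hgi i _ _ (fun j hj => substNeg_apply_not t g z j hj)
  have hcsub : ∀ d z, c d (substNeg t g z) = c d z :=
    fun d z => hci d _ _ (fun j hj => substNeg_apply_not t g z j hj)
  have hFsub : ∀ z, F (substNeg t g z) = ∑ d ∈ D, c d z * ∏ i, (- g i z) ^ (d i) := by
    intro z
    rw [hF]
    refine Finset.sum_congr rfl fun d _ => ?_
    rw [hcsub]
    congr 1
    refine Finset.prod_congr rfl fun i _ => ?_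
    rw [substNeg_apply_t t ht]
  choose qd hqdsm hqdz using fun d => perMonomial t ht g hgsm d
  have key : ∀ z, F z - F (substNeg t g z)
      = ∑ i, (∑ d ∈ D, c d z * qd d i z) * (z (t i) + g i z) := by
    intro z
    rw [hF z, hFsub z, ← Finset.sum_sub_distrib]
    calc ∑ d ∈ D, (c d z * ∏ i, (z (t i)) ^ (d i) - c d z * ∏ i, (- g i z) ^ (d i))
        = ∑ d ∈ D, c d z * ∑ i, qd d i z * (z (t i) + g i z) := by
          refine Finset.sum_congr rfl fun d _ => ?_
          rw [← mul_sub, hqdz d z]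
      _ = ∑ i, (∑ d ∈ D, c d z * qd d i z) * (z (t i) + g i z) := by
          simp only [Finset.mul_sum, Finset.sum_mul, mul_assoc]
          exact Finset.sum_comm
  refine ⟨⟨fun i z => ∑ d ∈ D, c d z * qd d i z, ?_, ?_⟩, ?_, ?_, ?_⟩
  · intro i
    exact ContDiff.sum fun d _ => (hcsm d).mul (hqdsm d i)
  · intro z
    have := key z
    linarith
  · have : (fun z => F (substNeg t g z))
        = fun z => ∑ d ∈ D, c d z * ∏ i, (- g i z) ^ (d i) := funext hFsub
    rw [this]
    exact ContDiff.sum fun d _ =>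
      (hcsm d).mul (contDiff_finset_prod _ _ fun i => ((hgsm i).neg).pow _)
  · intro z w hzw
    have hsw : substNeg t g z = substNeg t g w := by
      funext j
      unfold substNeg
      by_cases h : ∃ i, t i = j
      · rw [dif_pos h, dif_pos h, hgi _ z w hzw]
      · rw [dif_neg h, dif_neg h]
        exact hzw j (by simpa [Set.mem_range] using h)
    simp only [hsw]
  · rintro r' hr' ⟨q', hq'⟩
    funext z
    have h1 := hq' (substNeg t g z)
    have h2 : ∀ i, substNeg t g z (t i) + g i (substNeg t g z) = 0 := by
      intro i
      rw [substNeg_apply_t t ht, hgsub i z]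
      ring
    simp only [h2, mul_zero, Finset.sum_const_zero, zero_add] at h1
    have h3 : r' (substNeg t g z) = r' z :=
      hr' _ _ (fun j hj => substNeg_apply_not t g z j hj)
    rw [← h3]
    exact h1.symm
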